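/- For the frequency-dependent Moran process with 0 < w < 1/2, the exact average drift is ⟨ΔH⟩ = (2/N²)∫₀¹∫₀¹ x(1-x)y(1-y)·[(1-w)² - Nw²(2x-1)²(2y-1)²]/[(1-w)² - w²(2x-1)²(2y-1)²] dx dy. -/

import Mathlib

/-!
The Battle of the Sexes is zero-sum between the sexes, ⟨π^♀⟩ = -⟨π^♂⟩, so the male and female
Moran denominators are `D± = 1 - w ± w(2x-1)(2y-1)`, whose product is
`(1-w)² - w²(2x-1)²(2y-1)²`. Over this common denominator the selection bracket is
`-2w²(2x-1)²(2y-1)²` and the sum of the four reproductive functions is `2(1-w)²`, so the two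
integrands combine pointwise into the one on the right. For `0 < w < 1/2` both `D±` stay
positive on the unit square, so all integrands are continuous there and the iterated integrals
are linear.
-/

open Set Function

section IteratedIntegral

variable {f g h : ℝ → ℝ → ℝ} {a b c d : ℝ}

lemma exists_continuous_eqOn_uIcc_prod (hf : ContinuousOn (uncurry f) (uIcc a b ×ˢ uIcc c d)) :
    ∃ F : ℝ → ℝ → ℝ, Continuous (uncurry F) ∧ ∀ x ∈ uIcc a b, ∀ y ∈ uIcc c d, F x y = f x y := by
  let πab : ℝ → ℝ := fun x => projIcc (min a b) (max a b) min_le_max x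
  let πcd : ℝ → ℝ := fun y => projIcc (min c d) (max c d) min_le_max y
  refine ⟨fun x y => f (πab x) (πcd y), ?_, fun x hx y hy => ?_⟩
  · exact hf.comp_continuous (f := Prod.map πab πcd)
      (continuous_projIcc.subtype_val.prodMap continuous_projIcc.subtype_val)
      fun p => ⟨Subtype.prop _, Subtype.prop _⟩
  · simp only [πab, πcd, projIcc_of_mem _ hx, projIcc_of_mem _ hy]

lemma intervalIntegrable_of_continuousOn_uIcc_prod
    (hf : ContinuousOn (uncurry f) (uIcc a b ×ˢ uIcc c d)) {x : ℝ} (hx : x ∈ uIcc a b) :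
    IntervalIntegrable (f x) MeasureTheory.volume c d :=
  ContinuousOn.intervalIntegrable <|
    hf.comp (continuousOn_const.prodMk continuousOn_id) fun _ hy => ⟨hx, hy⟩

lemma intervalIntegrable_integral_of_continuousOn_uIcc_prod
    (hf : ContinuousOn (uncurry f) (uIcc a b ×ˢ uIcc c d)) :
    IntervalIntegrable (fun x => ∫ y in c..d, f x y) MeasureTheory.volume a b := by
  obtain ⟨F, hF, hFf⟩ := exists_continuous_eqOn_uIcc_prod hf
  refine ContinuousOn.intervalIntegrable <|
    (intervalIntegral.continuous_parametric_intervalIntegral_of_continuous'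
      (μ := MeasureTheory.volume) hF c d).continuousOn.congr fun x hx => ?_
  exact intervalIntegral.integral_congr fun y hy => (hFf x hx y hy).symm

lemma integral_integral_linear_combination {α β γ : ℝ}
    (hf : ContinuousOn (uncurry f) (uIcc a b ×ˢ uIcc c d))
    (hg : ContinuousOn (uncurry g) (uIcc a b ×ˢ uIcc c d))
    (hfgh : ∀ x ∈ uIcc a b, ∀ y ∈ uIcc c d, α * f x y + β * g x y = γ * h x y) :
    α * (∫ x in a..b, ∫ y in c..d, f x y) + β * (∫ x in a..b, ∫ y in c..d, g x y)
      = γ * ∫ x in a..b, ∫ y in c..d, h x y := by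
  calc α * (∫ x in a..b, ∫ y in c..d, f x y) + β * (∫ x in a..b, ∫ y in c..d, g x y)
      = ∫ x in a..b, (α * ∫ y in c..d, f x y) + β * ∫ y in c..d, g x y := by
        rw [intervalIntegral.integral_add
          ((intervalIntegrable_integral_of_continuousOn_uIcc_prod hf).const_mul α)
          ((intervalIntegrable_integral_of_continuousOn_uIcc_prod hg).const_mul β),
          intervalIntegral.integral_const_mul, intervalIntegral.integral_const_mul]
    _ = ∫ x in a..b, ∫ y in c..d, α * f x y + β * g x y :=
        intervalIntegral.integral_congr fun x hx => by
          rw [intervalIntegral.integral_add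
            ((intervalIntegrable_of_continuousOn_uIcc_prod hf hx).const_mul α)
            ((intervalIntegrable_of_continuousOn_uIcc_prod hg hx).const_mul β),
            intervalIntegral.integral_const_mul, intervalIntegral.integral_const_mul]
    _ = ∫ x in a..b, ∫ y in c..d, γ * h x y :=
        intervalIntegral.integral_congr fun x hx =>
          intervalIntegral.integral_congr fun y hy => hfgh x hx y hy
    _ = γ * ∫ x in a..b, ∫ y in c..d, h x y := by
        simp only [intervalIntegral.integral_const_mul]

end IteratedIntegral

section MoranProcess

/-- The Moran reproductive function `Φ_s = ½(1 - w + wπ_s)/(1 - w + w⟨π⟩)`. -/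
noncomputable def moranFitness (w π avgπ : ℝ) : ℝ :=
  (1 - w + w * π) / (2 * (1 - w + w * avgπ))

lemma moranFitness_sub_moranFitness (w π₁ π₂ avgπ : ℝ) :
    moranFitness w π₁ avgπ - moranFitness w π₂ avgπ = w * (π₁ - π₂) / 2 / (1 - w + w * avgπ) := by
  rw [moranFitness, moranFitness, ← sub_div, div_div]
  ring

lemma moranFitness_add_moranFitness_of_add_eq_zero {w π₁ π₂ : ℝ} (avgπ : ℝ) (h : π₁ + π₂ = 0) :
    moranFitness w π₁ avgπ + moranFitness w π₂ avgπ = (1 - w) / (1 - w + w * avgπ) := by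
  rw [moranFitness, moranFitness, ← add_div,
    show 1 - w + w * π₁ + (1 - w + w * π₂) = 2 * (1 - w) + w * (π₁ + π₂) by ring, h,
    mul_zero, add_zero, mul_div_mul_left _ _ two_ne_zero]

variable {w x y : ℝ}

/-- The bracket `(2x-1)(Φ_A^♂ - Φ_B^♂) + (2y-1)(Φ_A^♀ - Φ_B^♀)` of the Battle of the Sexes. -/
noncomputable def sexesSelectionTerm (w x y : ℝ) : ℝ :=
  (2 * x - 1) * (moranFitness w (2 * y - 1) ((2 * x - 1) * (2 * y - 1))
      - moranFitness w (1 - 2 * y) ((2 * x - 1) * (2 * y - 1)))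
    + (2 * y - 1) * (moranFitness w (1 - 2 * x) (-((2 * x - 1) * (2 * y - 1)))
      - moranFitness w (2 * x - 1) (-((2 * x - 1) * (2 * y - 1))))

/-- The sum `ΣΦ = Φ_A^♂ + Φ_B^♂ + Φ_A^♀ + Φ_B^♀` of the Battle of the Sexes. -/
noncomputable def sexesFitnessSum (w x y : ℝ) : ℝ :=
  moranFitness w (2 * y - 1) ((2 * x - 1) * (2 * y - 1))
    + moranFitness w (1 - 2 * y) ((2 * x - 1) * (2 * y - 1))
    + moranFitness w (1 - 2 * x) (-((2 * x - 1) * (2 * y - 1)))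
    + moranFitness w (2 * x - 1) (-((2 * x - 1) * (2 * y - 1)))

lemma moran_common_denominator_eq (w x y : ℝ) :
    (1 - w) ^ 2 - w ^ 2 * (2 * x - 1) ^ 2 * (2 * y - 1) ^ 2
      = (1 - w + w * ((2 * x - 1) * (2 * y - 1))) * (1 - w + w * -((2 * x - 1) * (2 * y - 1))) := by
  ring

lemma sexesSelectionTerm_eq (hDp : 1 - w + w * ((2 * x - 1) * (2 * y - 1)) ≠ 0)
    (hDm : 1 - w + w * -((2 * x - 1) * (2 * y - 1)) ≠ 0) :
    sexesSelectionTerm w x y = -(2 * w ^ 2 * (2 * x - 1) ^ 2 * (2 * y - 1) ^ 2)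
      / ((1 - w) ^ 2 - w ^ 2 * (2 * x - 1) ^ 2 * (2 * y - 1) ^ 2) := by
  rw [sexesSelectionTerm, moranFitness_sub_moranFitness, moranFitness_sub_moranFitness,
    moran_common_denominator_eq]
  calc _ = w * ((2 * x - 1) * (2 * y - 1)) * ((1 - w + w * ((2 * x - 1) * (2 * y - 1)))⁻¹
          - (1 - w + w * -((2 * x - 1) * (2 * y - 1)))⁻¹) := by ring
    _ = _ := by rw [inv_sub_inv hDp hDm]; ring

lemma sexesFitnessSum_eq (hDp : 1 - w + w * ((2 * x - 1) * (2 * y - 1)) ≠ 0)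
    (hDm : 1 - w + w * -((2 * x - 1) * (2 * y - 1)) ≠ 0) :
    sexesFitnessSum w x y
      = 2 * (1 - w) ^ 2 / ((1 - w) ^ 2 - w ^ 2 * (2 * x - 1) ^ 2 * (2 * y - 1) ^ 2) := by
  rw [sexesFitnessSum, add_assoc,
    moranFitness_add_moranFitness_of_add_eq_zero _ (by ring : 2 * y - 1 + (1 - 2 * y) = 0),
    moranFitness_add_moranFitness_of_add_eq_zero _ (by ring : 1 - 2 * x + (2 * x - 1) = 0),
    moran_common_denominator_eq, div_add_div _ _ hDp hDm]
  ring

lemma one_sub_add_mul_pos (hw0 : 0 ≤ w) (hw : w < 1 / 2) {q : ℝ} (hq : -1 ≤ q) :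
    0 < 1 - w + w * q := by
  nlinarith

lemma abs_two_mul_sub_one_mul_le_one (hx : x ∈ Icc (0 : ℝ) 1) (hy : y ∈ Icc (0 : ℝ) 1) :
    |(2 * x - 1) * (2 * y - 1)| ≤ 1 := by
  rw [abs_mul]
  exact mul_le_one₀ (abs_le.mpr ⟨by linarith [hx.1], by linarith [hx.2]⟩) (abs_nonneg _)
    (abs_le.mpr ⟨by linarith [hy.1], by linarith [hy.2]⟩)

lemma moran_denominators_pos (hw0 : 0 ≤ w) (hw : w < 1 / 2)
    (hx : x ∈ Icc (0 : ℝ) 1) (hy : y ∈ Icc (0 : ℝ) 1) :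
    0 < 1 - w + w * ((2 * x - 1) * (2 * y - 1)) ∧ 0 < 1 - w + w * -((2 * x - 1) * (2 * y - 1)) := by
  obtain ⟨hlo, hhi⟩ := abs_le.mp (abs_two_mul_sub_one_mul_le_one hx hy)
  exact ⟨one_sub_add_mul_pos hw0 hw hlo, one_sub_add_mul_pos hw0 hw (by linarith)⟩

lemma moran_common_denominator_pos (hw0 : 0 ≤ w) (hw : w < 1 / 2)
    (hx : x ∈ Icc (0 : ℝ) 1) (hy : y ∈ Icc (0 : ℝ) 1) :
    0 < (1 - w) ^ 2 - w ^ 2 * (2 * x - 1) ^ 2 * (2 * y - 1) ^ 2 := by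
  obtain ⟨hDp, hDm⟩ := moran_denominators_pos hw0 hw hx hy
  rw [moran_common_denominator_eq]
  exact mul_pos hDp hDm

lemma continuousOn_sexesSelectionTerm (hw0 : 0 ≤ w) (hw : w < 1 / 2) :
    ContinuousOn (uncurry fun x y => x * (1 - x) * y * (1 - y) * sexesSelectionTerm w x y)
      (Icc 0 1 ×ˢ Icc 0 1) := by
  refine ContinuousOn.congr (f := uncurry fun x y => x * (1 - x) * y * (1 - y) *
      (-(2 * w ^ 2 * (2 * x - 1) ^ 2 * (2 * y - 1) ^ 2)
        / ((1 - w) ^ 2 - w ^ 2 * (2 * x - 1) ^ 2 * (2 * y - 1) ^ 2))) ?_ fun p hp => ?_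
  · fun_prop (disch := rintro p ⟨hx, hy⟩; exact (moran_common_denominator_pos hw0 hw hx hy).ne')
  · obtain ⟨hDp, hDm⟩ := moran_denominators_pos hw0 hw hp.1 hp.2
    simp only [uncurry, sexesSelectionTerm_eq hDp.ne' hDm.ne']

lemma continuousOn_sexesFitnessSum (hw0 : 0 ≤ w) (hw : w < 1 / 2) :
    ContinuousOn (uncurry fun x y => x * (1 - x) * y * (1 - y) * sexesFitnessSum w x y)
      (Icc 0 1 ×ˢ Icc 0 1) := by
  refine ContinuousOn.congr (f := uncurry fun x y => x * (1 - x) * y * (1 - y) *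
      (2 * (1 - w) ^ 2 / ((1 - w) ^ 2 - w ^ 2 * (2 * x - 1) ^ 2 * (2 * y - 1) ^ 2)))
      ?_ fun p hp => ?_
  · fun_prop (disch := rintro p ⟨hx, hy⟩; exact (moran_common_denominator_pos hw0 hw hx hy).ne')
  · obtain ⟨hDp, hDm⟩ := moran_denominators_pos hw0 hw hp.1 hp.2
    simp only [uncurry, sexesFitnessSum_eq hDp.ne' hDm.ne']

lemma moran_drift_integrand_eq {N : ℝ} (hN : N ≠ 0) (hw0 : 0 ≤ w) (hw : w < 1 / 2)
    (hx : x ∈ Icc (0 : ℝ) 1) (hy : y ∈ Icc (0 : ℝ) 1) :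
    1 / N * (x * (1 - x) * y * (1 - y) * sexesSelectionTerm w x y)
        + 1 / N ^ 2 * (x * (1 - x) * y * (1 - y) * sexesFitnessSum w x y)
      = 2 / N ^ 2 * (x * (1 - x) * y * (1 - y) *
          (((1 - w) ^ 2 - N * w ^ 2 * (2 * x - 1) ^ 2 * (2 * y - 1) ^ 2)
            / ((1 - w) ^ 2 - w ^ 2 * (2 * x - 1) ^ 2 * (2 * y - 1) ^ 2))) := by
  obtain ⟨hDp, hDm⟩ := moran_denominators_pos hw0 hw hx hy
  rw [sexesSelectionTerm_eq hDp.ne' hDm.ne', sexesFitnessSum_eq hDp.ne' hDm.ne']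
  field_simp
  ring

end MoranProcess

/-- Exact average drift for the frequency-dependent Moran process in the Battle of the
Sexes, 0 < w < 1/2:
⟨ΔH⟩ = (2/N²)∬ x(1-x)y(1-y)·[(1-w)² − Nw²(2x-1)²(2y-1)²]/[(1-w)² − w²(2x-1)²(2y-1)²]. -/
theorem moran_drift_exact (w N : ℝ) (hw0 : 0 < w) (hw : w < 1 / 2) (hN : 0 < N) :
    (1 / N) * (∫ x in (0:ℝ)..1, ∫ y in (0:ℝ)..1,
        x * (1 - x) * y * (1 - y) *
          ((2 * x - 1) *
              ((1 - w + w * (2 * y - 1)) / (2 * (1 - w + w * ((2 * x - 1) * (2 * y - 1))))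
                - (1 - w + w * (1 - 2 * y)) / (2 * (1 - w + w * ((2 * x - 1) * (2 * y - 1)))))
            + (2 * y - 1) *
              ((1 - w + w * (1 - 2 * x)) / (2 * (1 - w + w * (-((2 * x - 1) * (2 * y - 1)))))
                - (1 - w + w * (2 * x - 1)) / (2 * (1 - w + w * (-((2 * x - 1) * (2 * y - 1))))))))
    + (1 / N ^ 2) * (∫ x in (0:ℝ)..1, ∫ y in (0:ℝ)..1,
        x * (1 - x) * y * (1 - y) *
          ((1 - w + w * (2 * y - 1)) / (2 * (1 - w + w * ((2 * x - 1) * (2 * y - 1))))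
            + (1 - w + w * (1 - 2 * y)) / (2 * (1 - w + w * ((2 * x - 1) * (2 * y - 1))))
            + (1 - w + w * (1 - 2 * x)) / (2 * (1 - w + w * (-((2 * x - 1) * (2 * y - 1)))))
            + (1 - w + w * (2 * x - 1)) / (2 * (1 - w + w * (-((2 * x - 1) * (2 * y - 1)))))))
    = (2 / N ^ 2) * (∫ x in (0:ℝ)..1, ∫ y in (0:ℝ)..1,
        x * (1 - x) * y * (1 - y) *
          (((1 - w) ^ 2 - N * w ^ 2 * (2 * x - 1) ^ 2 * (2 * y - 1) ^ 2)
            / ((1 - w) ^ 2 - w ^ 2 * (2 * x - 1) ^ 2 * (2 * y - 1) ^ 2))) := by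
  have hI : uIcc (0 : ℝ) 1 = Icc 0 1 := uIcc_of_le zero_le_one
  refine integral_integral_linear_combination ?_ ?_ fun x hx y hy => ?_
  · exact hI ▸ continuousOn_sexesSelectionTerm hw0.le hw
  · exact hI ▸ continuousOn_sexesFitnessSum hw0.le hw
  · exact moran_drift_integrand_eq hN.ne' hw0.le hw (hI ▸ hx) (hI ▸ hy)
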